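/- Let a > 0, σ > 0, 1 ≤ s < d, and let ξ be standard Gaussian. For the selector η̄_j = 1{log(cosh(aX_j/σ²)) ≥ t} with t = a²/(2σ²) + log(d/s - 1), applied to the Gaussian sequence model X_j = θ_j + σξ_j, one has for every θ ∈ Θ_d(s,a): (1/s)·E_θ Σ_j |η̄_j - η_j| ≤ (d/s - 1)·P(e^{-a²/(2σ²)}·cosh(aξ/σ) ≥ d/s - 1) + P(e^{-a²/(2σ²)}·cosh(aξ/σ + a²/σ²) < d/s - 1). -/

import Mathlib

open MeasureTheory ProbabilityTheory

/-- The law of the observation vector `X = θ + σξ` with i.i.d. standard Gaussian `ξ_j`. -/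
noncomputable def Pmodel (d : ℕ) (σ : ℝ) (θ : Fin d → ℝ) : Measure (Fin d → ℝ) :=
  Measure.pi fun j => gaussianReal (θ j) (Real.toNNReal (σ ^ 2))

/-!
The risk is the sum over coordinates of the misclassification probabilities. Writing
`X_j = θ_j + σξ`, a null coordinate is selected exactly on `{τ ≤ e^{-a²/2σ²} cosh(aξ/σ)}`
with `τ = d/s - 1`, while a signal coordinate is missed exactly when `b + (a/σ)ξ` falls in a
fixed centred interval, where `b = aθ_j/σ²`. The standard Gaussian mass of a shifted interval
decreases with the size of the shift, and `|b| ≥ a²/σ²`, so the miss probability is at most the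
one for `b = a²/σ²`. There are `d - s` null and `s` signal coordinates.
-/

open Real Set

lemma integral_sum_abs_ite_sub_ite {ι α : Type*} [Fintype ι] [MeasurableSpace α]
    (μ : ι → Measure α) [∀ i, IsProbabilityMeasure (μ i)] (q : α → Prop) [DecidablePred q]
    (hq : MeasurableSet {y | q y}) (p : ι → Prop) [DecidablePred p] :
    ∫ x, ∑ i, |(if q (x i) then (1 : ℝ) else 0) - (if p i then 1 else 0)| ∂Measure.pi μ
      = ∑ i, (μ i).real (if p i then {y | q y}ᶜ else {y | q y}) := by
  set A : ι → Set α := fun i => if p i then {y | q y}ᶜ else {y | q y}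
  have hA : ∀ i, MeasurableSet (A i) := fun i => by
    by_cases h : p i <;> simp [A, h, hq, hq.compl]
  have hA_eval : ∀ i, MeasurableSet ((fun x : ι → α => x i) ⁻¹' A i) := fun i =>
    measurable_pi_apply i (hA i)
  have hpt : ∀ (x : ι → α) i,
      |(if q (x i) then (1 : ℝ) else 0) - (if p i then 1 else 0)|
        = ((fun x : ι → α => x i) ⁻¹' A i).indicator 1 x := by
    intro x i
    by_cases hp : p i <;> by_cases hqx : q (x i) <;> simp [A, hp, hqx]
  simp_rw [hpt]
  rw [integral_finsetSum _ fun i _ => (integrable_const 1).indicator (hA_eval i)]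
  refine Finset.sum_congr rfl fun i _ => ?_
  rw [integral_indicator_one (hA_eval i)]
  exact (measurePreserving_eval μ i).measureReal_preimage (hA i).nullMeasurableSet

lemma gaussianReal_map_const_add_mul (m c : ℝ) :
    (gaussianReal 0 1).map (fun x => m + c * x) = gaussianReal m (c ^ 2).toNNReal := by
  have h : (fun x => m + c * x) = (m + ·) ∘ (c * ·) := rfl
  rw [h, ← Measure.map_map (measurable_const_add m) (measurable_const_mul c),
    gaussianReal_map_const_mul, gaussianReal_map_const_add]
  congr 1
  · ring
  · ext; simp [Real.coe_toNNReal _ (sq_nonneg c)]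

lemma gaussianPDFReal_zero_one_le_of_sq_le {x y : ℝ} (h : y ^ 2 ≤ x ^ 2) :
    gaussianPDFReal 0 1 x ≤ gaussianPDFReal 0 1 y := by
  simp only [gaussianPDFReal_def, sub_zero, NNReal.coe_one]
  gcongr

lemma gaussianPDFReal_zero_one_neg (x : ℝ) : gaussianPDFReal 0 1 (-x) = gaussianPDFReal 0 1 x := by
  simp only [gaussianPDFReal_def, sub_zero, neg_sq]

lemma gaussianReal_real_Ioo {l u : ℝ} (h : l ≤ u) :
    (gaussianReal 0 1).real (Ioo l u) = ∫ x in l..u, gaussianPDFReal 0 1 x := by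
  rw [measureReal_def, gaussianReal_apply_eq_integral 0 one_ne_zero, ENNReal.toReal_ofReal
    (setIntegral_nonneg measurableSet_Ioo fun x _ => gaussianPDFReal_nonneg 0 1 x),
    intervalIntegral.integral_of_le h, integral_Ioc_eq_integral_Ioo]

lemma antitoneOn_integral_gaussianPDFReal_centered {h : ℝ} (hh : 0 ≤ h) :
    AntitoneOn (fun m => ∫ x in (m - h)..(m + h), gaussianPDFReal 0 1 x) (Ici 0) := by
  set φ := gaussianPDFReal 0 1
  have hφ : Continuous φ := by unfold φ gaussianPDFReal; fun_prop
  have hφi : ∀ l u, IntervalIntegrable φ volume l u := fun l u =>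
    (integrable_gaussianPDFReal 0 1).intervalIntegrable
  have hF : ∀ m, (∫ x in (m - h)..(m + h), φ x)
      = (∫ x in (0 : ℝ)..(m + h), φ x) - ∫ x in (0 : ℝ)..(m - h), φ x := fun m =>
    (intervalIntegral.integral_interval_sub_left (hφi _ _) (hφi _ _)).symm
  have hderiv : ∀ m, HasDerivAt (fun m => ∫ x in (m - h)..(m + h), φ x)
      (φ (m + h) - φ (m - h)) m := by
    intro m
    simp only [hF]
    have hΦ := fun u => (hφ.integral_hasStrictDerivAt 0 u).hasDerivAt
    exact ((hΦ (m + h)).comp_add_const m h).sub ((hΦ (m - h)).comp_sub_const m h)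
  have hdiff : Differentiable ℝ (fun m => ∫ x in (m - h)..(m + h), φ x) :=
    fun m => (hderiv m).differentiableAt
  refine antitoneOn_of_deriv_nonpos (convex_Ici 0) hdiff.continuous.continuousOn
    hdiff.differentiableOn fun m hm => ?_
  rw [interior_Ici, mem_Ioi] at hm
  rw [(hderiv m).deriv, sub_nonpos]
  exact gaussianPDFReal_zero_one_le_of_sq_le (by nlinarith)

lemma gaussianReal_real_Ioo_centered_le {h m m' : ℝ} (hh : 0 ≤ h) (hm : |m| ≤ |m'|) :
    (gaussianReal 0 1).real (Ioo (m' - h) (m' + h))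
      ≤ (gaussianReal 0 1).real (Ioo (m - h) (m + h)) := by
  set F := fun m => ∫ x in (m - h)..(m + h), gaussianPDFReal 0 1 x
  have hF_abs : ∀ m, F |m| = F m := by
    intro m
    rcases abs_choice m with hm | hm
    · rw [hm]
    · rw [hm]
      simp only [F]
      have h_neg := intervalIntegral.integral_comp_neg (a := m - h) (b := m + h)
        (f := gaussianPDFReal 0 1)
      simp only [gaussianPDFReal_zero_one_neg] at h_neg
      rw [h_neg]
      congr 1 <;> ring
  rw [gaussianReal_real_Ioo (by linarith), gaussianReal_real_Ioo (by linarith)]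
  change F m' ≤ F m
  rw [← hF_abs m, ← hF_abs m']
  exact antitoneOn_integral_gaussianPDFReal_centered hh (abs_nonneg m) (abs_nonneg m') hm

lemma setOf_cosh_add_mul_lt {c r : ℝ} (b : ℝ) (hc : 0 ≤ c) (hr : 0 < r) :
    {x | cosh (b + r * x) < cosh c} = Ioo (-b / r - c / r) (-b / r + c / r) := by
  ext x
  rw [mem_ofPred_eq, cosh_lt_cosh, abs_of_nonneg hc, abs_lt, mem_Ioo, ← sub_div, ← add_div,
    div_lt_iff₀ hr, lt_div_iff₀ hr]
  constructor <;> rintro ⟨h₁, h₂⟩ <;> constructor <;> linarith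

lemma gaussianReal_real_cosh_lt_le {r b b₀ : ℝ} (T : ℝ) (hr : 0 < r) (hb : |b₀| ≤ |b|) :
    (gaussianReal 0 1).real {x | cosh (b + r * x) < T}
      ≤ (gaussianReal 0 1).real {x | cosh (b₀ + r * x) < T} := by
  rcases le_or_gt T 1 with hT | hT
  · have hempty : {x | cosh (b + r * x) < T} = ∅ :=
      eq_empty_of_forall_notMem fun x hx => (hT.trans (one_le_cosh _)).not_gt hx
    rw [hempty, measureReal_empty]
    exact measureReal_nonneg
  · have hc : 0 ≤ arcosh T := arcosh_nonneg hT.le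
    rw [← cosh_arcosh hT.le, setOf_cosh_add_mul_lt b hc hr, setOf_cosh_add_mul_lt b₀ hc hr]
    refine gaussianReal_real_Ioo_centered_le (by positivity) ?_
    simp only [neg_div, abs_neg, abs_div, abs_of_pos hr]
    gcongr

lemma add_log_le_log_cosh_iff {c τ : ℝ} (y : ℝ) (hτ : 0 < τ) :
    c + log τ ≤ log (cosh y) ↔ τ ≤ exp (-c) * cosh y := by
  rw [← exp_le_exp, exp_add, exp_log hτ, exp_log (cosh_pos y), exp_neg, inv_mul_eq_div,
    le_div_iff₀' (exp_pos c)]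

/-- The acceptance region of the selector: `η̄_j = 1` iff `X_j ∈ coshSelector a σ t`. -/
def coshSelector (a σ t : ℝ) : Set ℝ := {y | t ≤ log (cosh (a * y / σ ^ 2))}

lemma measurableSet_coshSelector (a σ t : ℝ) : MeasurableSet (coshSelector a σ t) :=
  measurableSet_le measurable_const (by fun_prop)

section CoshSelector

variable {a σ τ : ℝ}

lemma gaussianReal_real_coshSelector_of_zero (hσ : σ ≠ 0) (hτ : 0 < τ) :
    (gaussianReal 0 (σ ^ 2).toNNReal).real (coshSelector a σ (a ^ 2 / (2 * σ ^ 2) + log τ))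
      = (gaussianReal 0 1).real {x | τ ≤ exp (-a ^ 2 / (2 * σ ^ 2)) * cosh (a * x / σ)} := by
  rw [← gaussianReal_map_const_add_mul 0 σ,
    map_measureReal_apply (by fun_prop) (measurableSet_coshSelector _ _ _)]
  congr 1
  ext x
  have hx : a * (0 + σ * x) / σ ^ 2 = a * x / σ := by field_simp; ring
  rw [mem_preimage, coshSelector, mem_ofPred_eq, mem_ofPred_eq, hx,
    add_log_le_log_cosh_iff _ hτ, neg_div]

lemma gaussianReal_real_compl_coshSelector_le (ha : 0 < a) (hσ : 0 < σ) (hτ : 0 < τ)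
    {θ : ℝ} (hθ : a ≤ |θ|) :
    (gaussianReal θ (σ ^ 2).toNNReal).real (coshSelector a σ (a ^ 2 / (2 * σ ^ 2) + log τ))ᶜ
      ≤ (gaussianReal 0 1).real
          {x | exp (-a ^ 2 / (2 * σ ^ 2)) * cosh (a * x / σ + a ^ 2 / σ ^ 2) < τ} := by
  set T := τ / exp (-(a ^ 2 / (2 * σ ^ 2)))
  have hT : ∀ u, exp (-(a ^ 2 / (2 * σ ^ 2))) * cosh u < τ ↔ cosh u < T := fun u =>
    (lt_div_iff₀' (exp_pos _)).symm
  have hb : |a ^ 2 / σ ^ 2| ≤ |a * θ / σ ^ 2| := by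
    rw [abs_of_nonneg (by positivity : (0 : ℝ) ≤ a ^ 2 / σ ^ 2), abs_div, abs_mul, abs_of_pos ha,
      abs_of_pos (by positivity : (0 : ℝ) < σ ^ 2), sq]
    gcongr
  rw [← gaussianReal_map_const_add_mul θ σ,
    map_measureReal_apply (by fun_prop) (measurableSet_coshSelector _ _ _).compl]
  calc _ = (gaussianReal 0 1).real {x | cosh (a * θ / σ ^ 2 + a / σ * x) < T} := by
        congr 1
        ext x
        have hx : a * (θ + σ * x) / σ ^ 2 = a * θ / σ ^ 2 + a / σ * x := by field_simp
        rw [mem_preimage, mem_compl_iff, coshSelector, mem_ofPred_eq, mem_ofPred_eq, hx,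
          add_log_le_log_cosh_iff _ hτ, not_le, hT]
    _ ≤ (gaussianReal 0 1).real {x | cosh (a ^ 2 / σ ^ 2 + a / σ * x) < T} :=
        gaussianReal_real_cosh_lt_le T (by positivity) hb
    _ = _ := by
        congr 1
        ext x
        have hx : a ^ 2 / σ ^ 2 + a / σ * x = a * x / σ + a ^ 2 / σ ^ 2 := by ring
        rw [mem_ofPred_eq, mem_ofPred_eq, hx, neg_div, hT]

end CoshSelector

theorem cosh_selector_risk_bound (d s : ℕ) (hs : 1 ≤ s) (hsd : s < d)
    (a σ : ℝ) (ha : 0 < a) (hσ : 0 < σ) (θ : Fin d → ℝ)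
    (hcard : (Finset.univ.filter fun j => θ j ≠ 0).card = s)
    (hθ : ∀ j, θ j ≠ 0 → a ≤ |θ j|)
    (t : ℝ) (ht : t = a ^ 2 / (2 * σ ^ 2) + Real.log ((d : ℝ) / s - 1)) :
    (1 / (s : ℝ)) * ∫ x, (∑ j, |(if t ≤ Real.log (Real.cosh (a * x j / σ ^ 2))
          then (1 : ℝ) else 0) - (if θ j ≠ 0 then (1 : ℝ) else 0)|) ∂(Pmodel d σ θ)
      ≤ ((d : ℝ) / s - 1) *
          (gaussianReal 0 1 {x : ℝ | (d : ℝ) / s - 1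
            ≤ Real.exp (-a ^ 2 / (2 * σ ^ 2)) * Real.cosh (a * x / σ)}).toReal
        + (gaussianReal 0 1 {x : ℝ |
            Real.exp (-a ^ 2 / (2 * σ ^ 2)) * Real.cosh (a * x / σ + a ^ 2 / σ ^ 2)
              < (d : ℝ) / s - 1}).toReal := by
  subst ht
  set τ : ℝ := (d : ℝ) / s - 1
  set p₀ := (gaussianReal 0 1).real {x | τ ≤ exp (-a ^ 2 / (2 * σ ^ 2)) * cosh (a * x / σ)}
  set p₁ := (gaussianReal 0 1).real
    {x | exp (-a ^ 2 / (2 * σ ^ 2)) * cosh (a * x / σ + a ^ 2 / σ ^ 2) < τ}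
  have hs₀ : (0 : ℝ) < s := by exact_mod_cast hs
  have hτ : 0 < τ := by
    rw [sub_pos, one_lt_div hs₀]
    exact_mod_cast hsd
  have h_null : ((Finset.univ.filter fun j => ¬θ j ≠ 0).card : ℝ) = d - s := by
    rw [Finset.filter_not, Finset.card_sdiff_of_subset (Finset.filter_subset _ _), hcard,
      Finset.card_univ, Fintype.card_fin, Nat.cast_sub hsd.le]
  rw [← measureReal_def, ← measureReal_def, Pmodel,
    integral_sum_abs_ite_sub_ite _ _ (measurableSet_coshSelector _ _ _)]
  calc 1 / (s : ℝ) * ∑ j, _ ≤ 1 / (s : ℝ) * ∑ j, if θ j ≠ 0 then p₁ else p₀ := by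
        gcongr with j
        split_ifs with hj
        · exact gaussianReal_real_compl_coshSelector_le ha hσ hτ (hθ j hj)
        · rw [not_ne_iff.mp hj]
          exact (gaussianReal_real_coshSelector_of_zero hσ.ne' hτ).le
    _ = 1 / (s : ℝ) * (s * p₁ + (d - s) * p₀) := by
        rw [Finset.sum_ite, Finset.sum_const, Finset.sum_const, hcard, nsmul_eq_mul, nsmul_eq_mul,
          h_null]
    _ = τ * p₀ + p₁ := by
        simp only [τ]
        field_simp
        ring
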